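/- arXiv:1601.05159 — 9 statements merged into one kernel-verified Lean document; each statement's English description precedes it below -/
import Mathlib

section
/- In a bi-gyrogroupoid B, if a is a left inverse of b (i.e., a⊕b = 0), then lgyr[a,b] = id and rgyr[a,b] = id. -/
/-- A bi-gyrogroupoid: a set `β` with a binary operation `add`, an identity `zero`,
and two families of gyrations `lgyr`, `rgyr` satisfying axioms (BG1)–(BG5). -/
structure IsBiGyrogroupoid {β : Type*} (add : β → β → β) (zero : β)
    (lgyr rgyr : β → β → β → β) : Prop where
  /-- (BG1) `zero` is a two-sided identity. -/
  zero_add : ∀ a, add zero a = a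
  add_zero : ∀ a, add a zero = a
  /-- (BG2) every element has a left inverse. -/
  exists_left_inv : ∀ a, ∃ b, add b a = zero
  /-- (BG3) gyrations are automorphisms of `(β, add)`. -/
  lgyr_bijective : ∀ a b, Function.Bijective (lgyr a b)
  rgyr_bijective : ∀ a b, Function.Bijective (rgyr a b)
  lgyr_add : ∀ a b x y, lgyr a b (add x y) = add (lgyr a b x) (lgyr a b y)
  rgyr_add : ∀ a b x y, rgyr a b (add x y) = add (rgyr a b x) (rgyr a b y)
  /-- (BG3) the bi-gyroassociative law. -/
  bgassoc : ∀ a b c, add (add a b) (lgyr a b c) = add (rgyr b c a) (add b c)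
  /-- (BG4a) -/
  rgyr_red : ∀ a b, rgyr a b = rgyr (lgyr a b a) (add a b)
  /-- (BG4b) -/
  lgyr_red : ∀ a b, lgyr a b = lgyr (lgyr a b a) (add a b)
  /-- (BG5) -/
  lgyr_zero : ∀ a, lgyr a zero = id
  rgyr_zero : ∀ a, rgyr a zero = id

namespace IsBiGyrogroupoid

variable {β : Type*} {add : β → β → β} {zero : β} {lgyr rgyr : β → β → β → β}

theorem lgyr_eq_id_of_add_eq_zero (h : IsBiGyrogroupoid add zero lgyr rgyr) {a b : β}
    (hab : add a b = zero) : lgyr a b = id := by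
  rw [h.lgyr_red, hab, h.lgyr_zero]

theorem rgyr_eq_id_of_add_eq_zero (h : IsBiGyrogroupoid add zero lgyr rgyr) {a b : β}
    (hab : add a b = zero) : rgyr a b = id := by
  rw [h.rgyr_red, hab, h.rgyr_zero]

end IsBiGyrogroupoid

/-- If a is a left inverse of b, then the gyrations generated by (a, b) are trivial. -/
theorem biGyrogroupoid_gyr_left_inv {β : Type*} (add : β → β → β) (zero : β)
    (lgyr rgyr : β → β → β → β)
    (h : IsBiGyrogroupoid add zero lgyr rgyr) :
    ∀ a b, add a b = zero → lgyr a b = id ∧ rgyr a b = id :=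
  fun _ _ hab => ⟨h.lgyr_eq_id_of_add_eq_zero hab, h.rgyr_eq_id_of_add_eq_zero hab⟩
end

section
/- In a bi-gyrogroupoid, lgyr[a,⊖a] = lgyr[⊖a,a] = rgyr[a,⊖a] = rgyr[⊖a,a] = id for all a. -/
/-- In a bi-gyrogroupoid, gyrations generated by an element and its inverse are trivial. -/
theorem biGyrogroupoid_gyr_neg_self {β : Type*} (add : β → β → β) (zero : β)
    (lgyr rgyr : β → β → β → β) (neg : β → β)
    (h : IsBiGyrogroupoid add zero lgyr rgyr)
    (hneg : ∀ a, add (neg a) a = zero ∧ add a (neg a) = zero) :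
    ∀ a, lgyr a (neg a) = id ∧ lgyr (neg a) a = id ∧
      rgyr a (neg a) = id ∧ rgyr (neg a) a = id := by
  intro a
  obtain ⟨hneg_add, hadd_neg⟩ := hneg a
  exact ⟨h.lgyr_eq_id_of_add_eq_zero hadd_neg, h.lgyr_eq_id_of_add_eq_zero hneg_add,
    h.rgyr_eq_id_of_add_eq_zero hadd_neg, h.rgyr_eq_id_of_add_eq_zero hneg_add⟩
end

section
/- Let B be a bi-gyrotransversal of subgroups H_L and H_R in a group Γ containing the identity 1. Then H_L H_R is a subgroup of Γ in which both H_L and H_R are normal, H_L ∩ H_R = {1}, and H_L H_R is isomorphic to the direct product H_L × H_R. -/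
/-!
Taking `b = 1` in the bi-transversal decomposition, an element `g ∈ H_L ∩ H_R` decomposes both as
`g · 1 · 1` and as `1 · 1 · g`, so uniqueness forces `g = 1`. As `H_L` and `H_R` commute
elementwise, multiplication `H_L × H_R → Γ` is then an injective homomorphism; its image is
`H_L ⊔ H_R = H_L H_R`, and it normalizes both factors since each factor centralizes the other.
-/

open scoped Pointwise

namespace Subgroup

variable {G : Type*} [Group G]

def IsBiTransversal (HL HR : Subgroup G) (B : Set G) : Prop :=
  ∀ g : G, ∃! t : G × G × G, t.1 ∈ HL ∧ t.2.1 ∈ B ∧ t.2.2 ∈ HR ∧ g = t.1 * t.2.1 * t.2.2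

theorem IsBiTransversal.disjoint {HL HR : Subgroup G} {B : Set G}
    (hB : IsBiTransversal HL HR B) (one_mem_B : (1 : G) ∈ B) : Disjoint HL HR :=
  disjoint_def.mpr fun {g} hL hR =>
    congrArg Prod.fst <| (hB g).unique (y₁ := (g, 1, 1)) (y₂ := (1, 1, g))
      ⟨hL, one_mem_B, one_mem _, by simp⟩ ⟨one_mem _, one_mem_B, hR, by simp⟩

variable {H K : Subgroup G}

theorem sup_le_normalizer_left (hKH : K ≤ centralizer H) : H ⊔ K ≤ normalizer (H : Set G) :=
  sup_le le_normalizer (hKH.trans (centralizer_le_normalizer _))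

theorem sup_le_normalizer_right (hKH : K ≤ centralizer H) : H ⊔ K ≤ normalizer (K : Set G) :=
  sup_le ((le_centralizer_iff.mp hKH).trans (centralizer_le_normalizer _)) le_normalizer

theorem coe_sup_of_le_centralizer (hKH : K ≤ centralizer H) :
    ((H ⊔ K : Subgroup G) : Set G) = (H : Set G) * (K : Set G) :=
  coe_mul_of_left_le_normalizer_right H K
    ((le_centralizer_iff.mp hKH).trans (centralizer_le_normalizer _))

noncomputable def prodMulEquivSupOfDisjoint (hKH : K ≤ centralizer H) (hHK : Disjoint H K) :
    H × K ≃* (H ⊔ K : Subgroup G) :=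
  let mul := H.subtype.noncommCoprod K.subtype fun x y => hKH y.2 x x.2
  have mul_injective : Function.Injective mul :=
    (MonoidHom.noncommCoprod_injective _ _ _).mpr
      ⟨H.subtype_injective, K.subtype_injective, by simpa only [range_subtype] using hHK⟩
  (MonoidHom.ofInjective mul_injective).trans <| MulEquiv.subgroupCongr <|
    (MonoidHom.noncommCoprod_range _ _ _).trans (by rw [range_subtype, range_subtype])

end Subgroup

open Subgroup in
theorem biGyrotransversal_HLHR_subgroup_general {Γ : Type*} [Group Γ]
    (HL HR : Subgroup Γ) (B : Set Γ)
    -- B is a bi-transversal of HL and HR in Γ: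
    (uniq : ∀ g : Γ, ∃! t : Γ × Γ × Γ,
      t.1 ∈ HL ∧ t.2.1 ∈ B ∧ t.2.2 ∈ HR ∧ g = t.1 * t.2.1 * t.2.2)
    -- elements of HL commute with elements of HR:
    (comm : ∀ x ∈ HL, ∀ y ∈ HR, x * y = y * x)
    -- B contains the identity:
    (one_mem : (1 : Γ) ∈ B) :
    ∃ K : Subgroup Γ, (K : Set Γ) = {g : Γ | ∃ x ∈ HL, ∃ y ∈ HR, g = x * y} ∧
      (∀ k ∈ K, ∀ h ∈ HL, k * h * k⁻¹ ∈ HL) ∧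
      (∀ k ∈ K, ∀ h ∈ HR, k * h * k⁻¹ ∈ HR) ∧
      HL ⊓ HR = ⊥ ∧
      Nonempty (K ≃* HL × HR) := by
  have hcent : HR ≤ centralizer HL := fun y hy x hx => comm x hx y hy
  have hdisj : Disjoint HL HR := IsBiTransversal.disjoint uniq one_mem
  refine ⟨HL ⊔ HR, ?_, fun k hk h hh => ?_, fun k hk h hh => ?_, disjoint_iff.mp hdisj,
    ⟨(prodMulEquivSupOfDisjoint hcent hdisj).symm⟩⟩
  · rw [coe_sup_of_le_centralizer hcent]
    ext g
    simp only [Set.mem_mul, SetLike.mem_coe, Set.mem_ofPred_eq, eq_comm]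
  · exact (mem_normalizer_iff.mp (sup_le_normalizer_left hcent hk) h).mp hh
  · exact (mem_normalizer_iff.mp (sup_le_normalizer_right hcent hk) h).mp hh

/-- If `B` is a bi-gyrotransversal of subgroups `HL` and `HR` in a group `Γ` containing
the identity, then `HL HR` is a subgroup of `Γ`, `HL` and `HR` are normal in it,
`HL ∩ HR = {1}`, and `HL HR ≅ HL × HR`. -/
theorem biGyrotransversal_HLHR_subgroup {Γ : Type*} [Group Γ]
    (HL HR : Subgroup Γ) (B : Set Γ)
    -- B is a bi-transversal of HL and HR in Γ:
    (uniq : ∀ g : Γ, ∃! t : Γ × Γ × Γ,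
      t.1 ∈ HL ∧ t.2.1 ∈ B ∧ t.2.2 ∈ HR ∧ g = t.1 * t.2.1 * t.2.2)
    -- HL and HR normalize B:
    (normL : ∀ h ∈ HL, ∀ b ∈ B, h * b * h⁻¹ ∈ B)
    (normR : ∀ h ∈ HR, ∀ b ∈ B, h * b * h⁻¹ ∈ B)
    -- elements of HL commute with elements of HR:
    (comm : ∀ x ∈ HL, ∀ y ∈ HR, x * y = y * x)
    -- B contains the identity:
    (one_mem : (1 : Γ) ∈ B) :
    ∃ K : Subgroup Γ, (K : Set Γ) = {g : Γ | ∃ x ∈ HL, ∃ y ∈ HR, g = x * y} ∧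
      (∀ k ∈ K, ∀ h ∈ HL, k * h * k⁻¹ ∈ HL) ∧
      (∀ k ∈ K, ∀ h ∈ HR, k * h * k⁻¹ ∈ HR) ∧
      HL ⊓ HR = ⊥ ∧
      Nonempty (K ≃* HL × HR) :=
  biGyrotransversal_HLHR_subgroup_general HL HR B uniq comm one_mem
end

section
/- Let B be a bi-gyrotransversal of subgroups H_L and H_R in a group Γ, with bi-transversal operation ⊙ defined by the unique decomposition b₁b₂ = h_ℓ(b₁,b₂)(b₁⊙b₂)h_r(b₁,b₂). Then for every h ∈ H_L H_R, conjugation x ↦ hxh⁻¹ restricts to an automorphism of the groupoid (B, ⊙). Moreover h_ℓ(x,y)^h = h_ℓ(x^h, y^h) and h_r(x,y)^h = h_r(x^h, y^h), where x^h = hxh⁻¹. -/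
/-!
Any endomorphism `φ` of `Γ` that preserves `HL`, `B` and `HR` carries the decomposition
`a b = h_ℓ(a,b) (a ⊙ b) h_r(a,b)` to a decomposition of `φ a φ b` of the same shape, so by
uniqueness `φ` commutes with `h_ℓ`, `⊙` and `h_r`. Conjugation by `h = x y` with `x ∈ HL`,
`y ∈ HR` is such a map: on `HL` it agrees with conjugation by `x`, on `HR` with conjugation
by `y`, because the two subgroups commute; and both `h` and `h⁻¹ = y⁻¹ x⁻¹` normalize `B`.
-/

section BiTransversal

variable {Γ : Type*} [Group Γ]

lemma conj_mul_eq_conj_left {x y l : Γ} (hyl : Commute y l) :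
    x * y * l * (x * y)⁻¹ = x * l * x⁻¹ := by
  rw [mul_inv_rev, mul_assoc x y l, hyl.eq]
  group

lemma conj_mul_eq_conj_right {x y r : Γ} (hx : Commute x (y * r * y⁻¹)) :
    x * y * r * (x * y)⁻¹ = y * r * y⁻¹ := by
  calc x * y * r * (x * y)⁻¹ = x * (y * r * y⁻¹) * x⁻¹ := by group
    _ = y * r * y⁻¹ := by rw [hx.eq]; group

lemma conj_mul_mem_of_normalize {H K : Subgroup Γ} {B : Set Γ}
    (normH : ∀ h ∈ H, ∀ b ∈ B, h * b * h⁻¹ ∈ B) (normK : ∀ k ∈ K, ∀ b ∈ B, k * b * k⁻¹ ∈ B)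
    {x y b : Γ} (hx : x ∈ H) (hy : y ∈ K) (hb : b ∈ B) :
    x * y * b * (x * y)⁻¹ ∈ B := by
  have : x * y * b * (x * y)⁻¹ = x * (y * b * y⁻¹) * x⁻¹ := by group
  exact this ▸ normH x hx _ (normK y hy b hb)

lemma eq_of_mul_mul_eq_of_biTransversal {HL HR : Subgroup Γ} {B : Set Γ}
    (uniq : ∀ g : Γ, ∃! t : Γ × Γ × Γ,
      t.1 ∈ HL ∧ t.2.1 ∈ B ∧ t.2.2 ∈ HR ∧ g = t.1 * t.2.1 * t.2.2)
    {l b r l' b' r' : Γ} (hl : l ∈ HL) (hb : b ∈ B) (hr : r ∈ HR)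
    (hl' : l' ∈ HL) (hb' : b' ∈ B) (hr' : r' ∈ HR) (h : l * b * r = l' * b' * r') :
    l = l' ∧ b = b' ∧ r = r' := by
  simpa [Prod.ext_iff] using (uniq (l * b * r)).unique (y₁ := (l, b, r)) (y₂ := (l', b', r'))
    ⟨hl, hb, hr, rfl⟩ ⟨hl', hb', hr', h⟩

lemma map_biTransversal_op {F : Type*} [FunLike F Γ Γ] [MulHomClass F Γ Γ]
    {HL HR : Subgroup Γ} {B : Set Γ} {hl hr odot : Γ → Γ → Γ}
    (uniq : ∀ g : Γ, ∃! t : Γ × Γ × Γ,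
      t.1 ∈ HL ∧ t.2.1 ∈ B ∧ t.2.2 ∈ HR ∧ g = t.1 * t.2.1 * t.2.2)
    (hl_mem : ∀ a ∈ B, ∀ b ∈ B, hl a b ∈ HL)
    (hr_mem : ∀ a ∈ B, ∀ b ∈ B, hr a b ∈ HR)
    (odot_mem : ∀ a ∈ B, ∀ b ∈ B, odot a b ∈ B)
    (decomp : ∀ a ∈ B, ∀ b ∈ B, a * b = hl a b * odot a b * hr a b)
    (φ : F) (hφL : Set.MapsTo φ HL HL) (hφR : Set.MapsTo φ HR HR) (hφB : Set.MapsTo φ B B)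
    {a b : Γ} (ha : a ∈ B) (hb : b ∈ B) :
    φ (hl a b) = hl (φ a) (φ b) ∧ φ (odot a b) = odot (φ a) (φ b) ∧
      φ (hr a b) = hr (φ a) (φ b) := by
  have ha' := hφB ha
  have hb' := hφB hb
  refine eq_of_mul_mul_eq_of_biTransversal uniq (hφL (hl_mem a ha b hb))
    (hφB (odot_mem a ha b hb)) (hφR (hr_mem a ha b hb)) (hl_mem _ ha' _ hb')
    (odot_mem _ ha' _ hb') (hr_mem _ ha' _ hb') ?_
  rw [← map_mul, ← map_mul, ← decomp a ha b hb, map_mul, decomp _ ha' _ hb']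

end BiTransversal

/-- In a bi-gyrotransversal decomposition, conjugation by any element of `HL HR`
restricts to an automorphism of the bi-transversal groupoid `(B, ⊙)`, and the
transversal maps are equivariant under this conjugation. -/
theorem biGyrotransversal_conj_automorphism {Γ : Type*} [Group Γ]
    (HL HR : Subgroup Γ) (B : Set Γ)
    (hl hr odot : Γ → Γ → Γ)
    -- B is a bi-transversal of HL and HR in Γ:
    (uniq : ∀ g : Γ, ∃! t : Γ × Γ × Γ,
      t.1 ∈ HL ∧ t.2.1 ∈ B ∧ t.2.2 ∈ HR ∧ g = t.1 * t.2.1 * t.2.2)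
    -- the transversal maps and the bi-transversal operation:
    (hl_mem : ∀ a ∈ B, ∀ b ∈ B, hl a b ∈ HL)
    (hr_mem : ∀ a ∈ B, ∀ b ∈ B, hr a b ∈ HR)
    (odot_mem : ∀ a ∈ B, ∀ b ∈ B, odot a b ∈ B)
    (decomp : ∀ a ∈ B, ∀ b ∈ B, a * b = hl a b * odot a b * hr a b)
    -- HL and HR normalize B:
    (normL : ∀ h ∈ HL, ∀ b ∈ B, h * b * h⁻¹ ∈ B)
    (normR : ∀ h ∈ HR, ∀ b ∈ B, h * b * h⁻¹ ∈ B)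
    -- elements of HL commute with elements of HR:
    (comm : ∀ x ∈ HL, ∀ y ∈ HR, x * y = y * x)
    :
    ∀ h : Γ, (∃ x ∈ HL, ∃ y ∈ HR, h = x * y) →
      Set.BijOn (fun x => h * x * h⁻¹) B B ∧
      ∀ x ∈ B, ∀ y ∈ B,
        h * x * h⁻¹ ∈ B ∧
        odot (h * x * h⁻¹) (h * y * h⁻¹) = h * odot x y * h⁻¹ ∧
        h * hl x y * h⁻¹ = hl (h * x * h⁻¹) (h * y * h⁻¹) ∧
        h * hr x y * h⁻¹ = hr (h * x * h⁻¹) (h * y * h⁻¹) := by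
  rintro _ ⟨x, hx, y, hy, rfl⟩
  have mapsL : Set.MapsTo (MulAut.conj (x * y)) HL HL := fun l hl' => by
    rw [MulAut.conj_apply, conj_mul_eq_conj_left (comm l hl' y hy).symm]
    exact mul_mem (mul_mem hx hl') (inv_mem hx)
  have mapsR : Set.MapsTo (MulAut.conj (x * y)) HR HR := fun r hr' => by
    have hyr : y * r * y⁻¹ ∈ HR := mul_mem (mul_mem hy hr') (inv_mem hy)
    rwa [MulAut.conj_apply, conj_mul_eq_conj_right (comm x hx _ hyr)]
  have mapsB : Set.MapsTo (MulAut.conj (x * y)) B B := fun b hb =>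
    conj_mul_mem_of_normalize normL normR hx hy hb
  have mapsB_inv : Set.MapsTo (fun b => (x * y)⁻¹ * b * (x * y)) B B := fun b hb => by
    simpa [mul_inv_rev] using conj_mul_mem_of_normalize normR normL (inv_mem hy) (inv_mem hx) hb
  refine ⟨Set.InvOn.bijOn ⟨fun b _ => by group, fun b _ => by group⟩ mapsB mapsB_inv,
    fun a ha b hb => ?_⟩
  obtain ⟨hL, hO, hR⟩ :=
    map_biTransversal_op uniq hl_mem hr_mem odot_mem decomp _ mapsL mapsR mapsB ha hb
  simp only [MulAut.conj_apply] at hL hO hR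
  exact ⟨mapsB ha, hO.symm, hL, hR⟩
end

section
/- Let B be a bi-gyrotransversal of subgroups H_L and H_R in a group Γ. Then (a⊙b)⊙lgyr[a,b](c) = rgyr[b,c](a)⊙(b⊙c) for all a, b, c ∈ B. -/
/-!
Both sides of the law are the `B`-factor of `a * b * c` in its `HL * B * HR` decomposition:
grouping the product as `(a * b) * c` and moving `hr(a,b)` past `c` produces the left-hand side,
grouping it as `a * (b * c)` and moving `hl(b,c)` past `a` produces the right-hand side.
-/

theorem middle_eq_of_existsUnique_decomposition {Γ : Type*} [Group Γ]
    {HL HR : Subgroup Γ} {B : Set Γ}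
    (uniq : ∀ g : Γ, ∃! t : Γ × Γ × Γ,
      t.1 ∈ HL ∧ t.2.1 ∈ B ∧ t.2.2 ∈ HR ∧ g = t.1 * t.2.1 * t.2.2)
    {l₁ m₁ r₁ l₂ m₂ r₂ : Γ} (hl₁ : l₁ ∈ HL) (hm₁ : m₁ ∈ B) (hr₁ : r₁ ∈ HR)
    (hl₂ : l₂ ∈ HL) (hm₂ : m₂ ∈ B) (hr₂ : r₂ ∈ HR)
    (h : l₁ * m₁ * r₁ = l₂ * m₂ * r₂) : m₁ = m₂ := by
  obtain ⟨t, -, ht⟩ := uniq (l₁ * m₁ * r₁)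
  have h₁ : (l₁, m₁, r₁) = t := ht _ ⟨hl₁, hm₁, hr₁, rfl⟩
  have h₂ : (l₂, m₂, r₂) = t := ht _ ⟨hl₂, hm₂, hr₂, h⟩
  exact congrArg (·.2.1) (h₁.trans h₂.symm)

theorem biGyrotransversal_bigyroassociative_general {Γ : Type*} [Group Γ]
    (HL HR : Subgroup Γ) (B : Set Γ)
    (hl hr odot : Γ → Γ → Γ)
    -- B is a bi-transversal of HL and HR in Γ:
    (uniq : ∀ g : Γ, ∃! t : Γ × Γ × Γ,
      t.1 ∈ HL ∧ t.2.1 ∈ B ∧ t.2.2 ∈ HR ∧ g = t.1 * t.2.1 * t.2.2)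
    -- the transversal maps and the bi-transversal operation:
    (hl_mem : ∀ a ∈ B, ∀ b ∈ B, hl a b ∈ HL)
    (hr_mem : ∀ a ∈ B, ∀ b ∈ B, hr a b ∈ HR)
    (odot_mem : ∀ a ∈ B, ∀ b ∈ B, odot a b ∈ B)
    (decomp : ∀ a ∈ B, ∀ b ∈ B, a * b = hl a b * odot a b * hr a b)
    -- HL and HR normalize B:
    (normL : ∀ h ∈ HL, ∀ b ∈ B, h * b * h⁻¹ ∈ B)
    (normR : ∀ h ∈ HR, ∀ b ∈ B, h * b * h⁻¹ ∈ B)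
    :
    ∀ a ∈ B, ∀ b ∈ B, ∀ c ∈ B,
      odot (odot a b) (hr a b * c * (hr a b)⁻¹) =
        odot ((hl b c)⁻¹ * a * hl b c) (odot b c) := by
  intro a ha b hb c hc
  have hab := odot_mem a ha b hb
  have hbc := odot_mem b hb c hc
  have hc' : hr a b * c * (hr a b)⁻¹ ∈ B := normR _ (hr_mem a ha b hb) c hc
  have ha' : (hl b c)⁻¹ * a * hl b c ∈ B := by
    simpa using normL _ (inv_mem (hl_mem b hb c hc)) a ha
  refine middle_eq_of_existsUnique_decomposition uniq
    (mul_mem (hl_mem a ha b hb) (hl_mem _ hab _ hc')) (odot_mem _ hab _ hc')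
    (mul_mem (hr_mem _ hab _ hc') (hr_mem a ha b hb))
    (mul_mem (hl_mem b hb c hc) (hl_mem _ ha' _ hbc)) (odot_mem _ ha' _ hbc)
    (mul_mem (hr_mem _ ha' _ hbc) (hr_mem b hb c hc)) ?_
  calc _ = hl a b * (odot a b * (hr a b * c * (hr a b)⁻¹)) * hr a b := by
        rw [decomp _ hab _ hc']; group
    _ = a * b * c := by rw [decomp a ha b hb]; group
    _ = hl b c * ((hl b c)⁻¹ * a * hl b c * odot b c) * hr b c := by
        rw [mul_assoc a, decomp b hb c hc]; group
    _ = _ := by rw [decomp _ ha' _ hbc]; group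

/-- The bi-gyroassociative law in a bi-gyrotransversal decomposition:
`(a⊙b) ⊙ lgyr[a,b](c) = rgyr[b,c](a) ⊙ (b⊙c)`, where
`lgyr[a,b](c) = hr(a,b) c hr(a,b)⁻¹` and `rgyr[b,c](a) = hl(b,c)⁻¹ a hl(b,c)`. -/
theorem biGyrotransversal_bigyroassociative {Γ : Type*} [Group Γ]
    (HL HR : Subgroup Γ) (B : Set Γ)
    (hl hr odot : Γ → Γ → Γ)
    -- B is a bi-transversal of HL and HR in Γ:
    (uniq : ∀ g : Γ, ∃! t : Γ × Γ × Γ,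
      t.1 ∈ HL ∧ t.2.1 ∈ B ∧ t.2.2 ∈ HR ∧ g = t.1 * t.2.1 * t.2.2)
    -- the transversal maps and the bi-transversal operation:
    (hl_mem : ∀ a ∈ B, ∀ b ∈ B, hl a b ∈ HL)
    (hr_mem : ∀ a ∈ B, ∀ b ∈ B, hr a b ∈ HR)
    (odot_mem : ∀ a ∈ B, ∀ b ∈ B, odot a b ∈ B)
    (decomp : ∀ a ∈ B, ∀ b ∈ B, a * b = hl a b * odot a b * hr a b)
    -- HL and HR normalize B:
    (normL : ∀ h ∈ HL, ∀ b ∈ B, h * b * h⁻¹ ∈ B)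
    (normR : ∀ h ∈ HR, ∀ b ∈ B, h * b * h⁻¹ ∈ B)
    -- elements of HL commute with elements of HR:
    (comm : ∀ x ∈ HL, ∀ y ∈ HR, x * y = y * x)
    :
    ∀ a ∈ B, ∀ b ∈ B, ∀ c ∈ B,
      odot (odot a b) (hr a b * c * (hr a b)⁻¹) =
        odot ((hl b c)⁻¹ * a * hl b c) (odot b c) :=
  biGyrotransversal_bigyroassociative_general HL HR B hl hr odot uniq hl_mem hr_mem odot_mem decomp
    normL normR
end

section
/- Let B be a bi-gyrotransversal of subgroups H_L and H_R in a group Γ, and suppose B is a twisted subgroup of Γ (1 ∈ B, B closed under inversion, and aba ∈ B for a,b ∈ B). Then lgyr[a,b]⁻¹ = lgyr[b⁻¹,a⁻¹] and rgyr[a,b]⁻¹ = rgyr[b⁻¹,a⁻¹], and (a⊙b)⁻¹ = (lgyr[a,b]∘rgyr[a,b])(b⁻¹⊙a⁻¹), for all a, b ∈ B. -/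
/-! Since `hl a b` and `hr a b` commute, inverting `a * b = hl a b * (a ⊙ b) * hr a b` gives a
decomposition of `b⁻¹ * a⁻¹` of the form `(hl a b)⁻¹ * c * (hr a b)⁻¹`, where `c`, a conjugate of
`(a ⊙ b)⁻¹` by `HL` and `HR`, lies in `B`. Uniqueness of the decomposition of `b⁻¹ * a⁻¹` then
identifies `hl b⁻¹ a⁻¹`, `b⁻¹ ⊙ a⁻¹` and `hr b⁻¹ a⁻¹`. -/

theorem eq_of_mul_mul_eq_mul_mul_of_existsUnique {Γ : Type*} [Group Γ]
    {HL HR : Subgroup Γ} {B : Set Γ}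
    (uniq : ∀ g : Γ, ∃! t : Γ × Γ × Γ,
      t.1 ∈ HL ∧ t.2.1 ∈ B ∧ t.2.2 ∈ HR ∧ g = t.1 * t.2.1 * t.2.2)
    {l l' x x' r r' : Γ} (hl : l ∈ HL) (hx : x ∈ B) (hr : r ∈ HR)
    (hl' : l' ∈ HL) (hx' : x' ∈ B) (hr' : r' ∈ HR) (h : l * x * r = l' * x' * r') :
    l = l' ∧ x = x' ∧ r = r' := by
  obtain ⟨_, _, hunique⟩ := uniq (l * x * r)
  have := (hunique (l, x, r) ⟨hl, hx, hr, rfl⟩).trans (hunique (l', x', r') ⟨hl', hx', hr', h⟩).symm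
  simpa only [Prod.ext_iff] using this

theorem Commute.mul_mul_inv_eq {Γ : Type*} [Group Γ] {l r : Γ} (h : Commute l r) (x : Γ) :
    (l * x * r)⁻¹ = l⁻¹ * (l * (r⁻¹ * x⁻¹ * r) * l⁻¹) * r⁻¹ := by
  have hconj : r * l⁻¹ * r⁻¹ = l⁻¹ := by rw [← h.inv_left.eq, mul_inv_cancel_right]
  calc (l * x * r)⁻¹ = r⁻¹ * x⁻¹ * (r * l⁻¹ * r⁻¹) := by rw [hconj]; group
    _ = _ := by group

theorem biGyrotransversal_twisted_gyr_inv_general {Γ : Type*} [Group Γ]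
    (HL HR : Subgroup Γ) (B : Set Γ)
    (hl hr odot : Γ → Γ → Γ)
    -- B is a bi-transversal of HL and HR in Γ:
    (uniq : ∀ g : Γ, ∃! t : Γ × Γ × Γ,
      t.1 ∈ HL ∧ t.2.1 ∈ B ∧ t.2.2 ∈ HR ∧ g = t.1 * t.2.1 * t.2.2)
    -- the transversal maps and the bi-transversal operation:
    (hl_mem : ∀ a ∈ B, ∀ b ∈ B, hl a b ∈ HL)
    (hr_mem : ∀ a ∈ B, ∀ b ∈ B, hr a b ∈ HR)
    (odot_mem : ∀ a ∈ B, ∀ b ∈ B, odot a b ∈ B)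
    (decomp : ∀ a ∈ B, ∀ b ∈ B, a * b = hl a b * odot a b * hr a b)
    -- HL and HR normalize B:
    (normL : ∀ h ∈ HL, ∀ b ∈ B, h * b * h⁻¹ ∈ B)
    (normR : ∀ h ∈ HR, ∀ b ∈ B, h * b * h⁻¹ ∈ B)
    -- elements of HL commute with elements of HR:
    (comm : ∀ x ∈ HL, ∀ y ∈ HR, x * y = y * x)
    (inv_mem : ∀ a ∈ B, a⁻¹ ∈ B) :
    ∀ a ∈ B, ∀ b ∈ B,
      (∀ x ∈ B, (hr a b)⁻¹ * x * hr a b = hr b⁻¹ a⁻¹ * x * (hr b⁻¹ a⁻¹)⁻¹) ∧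
      (∀ x ∈ B, hl a b * x * (hl a b)⁻¹ = (hl b⁻¹ a⁻¹)⁻¹ * x * hl b⁻¹ a⁻¹) ∧
      (odot a b)⁻¹ =
        hr a b * ((hl a b)⁻¹ * odot b⁻¹ a⁻¹ * hl a b) * (hr a b)⁻¹ := by
  intro a ha b hb
  have hai := inv_mem a ha
  have hbi := inv_mem b hb
  have hL := hl_mem a ha b hb
  have hR := hr_mem a ha b hb
  have hinv : b⁻¹ * a⁻¹ = (hl a b)⁻¹ *
      (hl a b * ((hr a b)⁻¹ * (odot a b)⁻¹ * hr a b) * (hl a b)⁻¹) * (hr a b)⁻¹ := by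
    rw [← mul_inv_rev, decomp a ha b hb, Commute.mul_mul_inv_eq (comm _ hL _ hR)]
  have hconj_mem : hl a b * ((hr a b)⁻¹ * (odot a b)⁻¹ * hr a b) * (hl a b)⁻¹ ∈ B := by
    refine normL _ hL _ ?_
    simpa only [inv_inv] using normR _ (HR.inv_mem hR) _ (inv_mem _ (odot_mem a ha b hb))
  obtain ⟨hl_eq, odot_eq, hr_eq⟩ := eq_of_mul_mul_eq_mul_mul_of_existsUnique uniq
    (hl_mem _ hbi _ hai) (odot_mem _ hbi _ hai) (hr_mem _ hbi _ hai)
    (HL.inv_mem hL) hconj_mem (HR.inv_mem hR) ((decomp _ hbi _ hai).symm.trans hinv)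
  refine ⟨fun x _ => ?_, fun x _ => ?_, ?_⟩
  · rw [hr_eq, inv_inv]
  · rw [hl_eq, inv_inv]
  · rw [odot_eq]
    group

/-- If `B` is moreover a twisted subgroup, then the gyrations satisfy
`lgyr[a,b]⁻¹ = lgyr[b⁻¹,a⁻¹]`, `rgyr[a,b]⁻¹ = rgyr[b⁻¹,a⁻¹]` (as maps of `B`), and
`(a⊙b)⁻¹ = (lgyr[a,b] ∘ rgyr[a,b])(b⁻¹⊙a⁻¹)`. -/
theorem biGyrotransversal_twisted_gyr_inv {Γ : Type*} [Group Γ]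
    (HL HR : Subgroup Γ) (B : Set Γ)
    (hl hr odot : Γ → Γ → Γ)
    -- B is a bi-transversal of HL and HR in Γ:
    (uniq : ∀ g : Γ, ∃! t : Γ × Γ × Γ,
      t.1 ∈ HL ∧ t.2.1 ∈ B ∧ t.2.2 ∈ HR ∧ g = t.1 * t.2.1 * t.2.2)
    -- the transversal maps and the bi-transversal operation:
    (hl_mem : ∀ a ∈ B, ∀ b ∈ B, hl a b ∈ HL)
    (hr_mem : ∀ a ∈ B, ∀ b ∈ B, hr a b ∈ HR)
    (odot_mem : ∀ a ∈ B, ∀ b ∈ B, odot a b ∈ B)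
    (decomp : ∀ a ∈ B, ∀ b ∈ B, a * b = hl a b * odot a b * hr a b)
    -- HL and HR normalize B:
    (normL : ∀ h ∈ HL, ∀ b ∈ B, h * b * h⁻¹ ∈ B)
    (normR : ∀ h ∈ HR, ∀ b ∈ B, h * b * h⁻¹ ∈ B)
    -- elements of HL commute with elements of HR:
    (comm : ∀ x ∈ HL, ∀ y ∈ HR, x * y = y * x)
    -- B is a twisted subgroup of Γ:
    (one_mem : (1 : Γ) ∈ B)
    (inv_mem : ∀ a ∈ B, a⁻¹ ∈ B)
    (tw : ∀ a ∈ B, ∀ b ∈ B, a * b * a ∈ B) :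
    ∀ a ∈ B, ∀ b ∈ B,
      (∀ x ∈ B, (hr a b)⁻¹ * x * hr a b = hr b⁻¹ a⁻¹ * x * (hr b⁻¹ a⁻¹)⁻¹) ∧
      (∀ x ∈ B, hl a b * x * (hl a b)⁻¹ = (hl b⁻¹ a⁻¹)⁻¹ * x * hl b⁻¹ a⁻¹) ∧
      (odot a b)⁻¹ =
        hr a b * ((hl a b)⁻¹ * odot b⁻¹ a⁻¹ * hl a b) * (hr a b)⁻¹ :=
  biGyrotransversal_twisted_gyr_inv_general HL HR B hl hr odot uniq hl_mem hr_mem odot_mem decomp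
    normL normR comm inv_mem
end

section
/- Let Γ = H_L B H_R be a bi-gyrodecomposition. Then left and right gyrations are even: lgyr[a⁻¹,b⁻¹] = lgyr[a,b] and rgyr[a⁻¹,b⁻¹] = rgyr[a,b] for all a, b ∈ B. -/
/-!
Write `b * a = l * c * r` with `l = hl b a`, `c = odot b a`, `r = hr b a`. Since `l` and `r`
commute, `a⁻¹ * b⁻¹ = (b * a)⁻¹ = r⁻¹ * c⁻¹ * l⁻¹` can be rewritten as `l⁻¹ * m * r⁻¹` with
`m = r⁻¹ * (l * c⁻¹ * l⁻¹) * r ∈ B`. Uniqueness of the factorization gives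
`hl a⁻¹ b⁻¹ = (hl b a)⁻¹ = hl a b` and `hr a⁻¹ b⁻¹ = (hr b a)⁻¹ = hr a b`, so the gyrations,
being conjugations by these elements, agree.
-/

/-- A bi-gyrodecomposition `Γ = HL B HR`: `B` is a bi-gyrotransversal of the subgroups
`HL` and `HR` in the group `Γ`, `B` is a twisted subgroup of `Γ`, and the transversal
maps `hl`, `hr` (arising from the unique decomposition
`a * b = hl a b * odot a b * hr a b`) satisfy `hl(a,b)⁻¹ = hl(b,a)` and
`hr(a,b)⁻¹ = hr(b,a)`. -/
structure IsBiGyroDecomposition {Γ : Type*} [Group Γ]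
    (HL HR : Subgroup Γ) (B : Set Γ) (hl hr odot : Γ → Γ → Γ) : Prop where
  /-- every element of `Γ` factors uniquely as `h_ℓ * b * h_r`. -/
  uniq : ∀ g : Γ, ∃! t : Γ × Γ × Γ,
    t.1 ∈ HL ∧ t.2.1 ∈ B ∧ t.2.2 ∈ HR ∧ g = t.1 * t.2.1 * t.2.2
  hl_mem : ∀ a ∈ B, ∀ b ∈ B, hl a b ∈ HL
  hr_mem : ∀ a ∈ B, ∀ b ∈ B, hr a b ∈ HR
  odot_mem : ∀ a ∈ B, ∀ b ∈ B, odot a b ∈ B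
  decomp : ∀ a ∈ B, ∀ b ∈ B, a * b = hl a b * odot a b * hr a b
  /-- `HL` and `HR` normalize `B`. -/
  normL : ∀ h ∈ HL, ∀ b ∈ B, h * b * h⁻¹ ∈ B
  normR : ∀ h ∈ HR, ∀ b ∈ B, h * b * h⁻¹ ∈ B
  /-- elements of `HL` commute with elements of `HR`. -/
  comm : ∀ x ∈ HL, ∀ y ∈ HR, x * y = y * x
  /-- `B` is a twisted subgroup of `Γ`. -/
  one_mem : (1 : Γ) ∈ B
  inv_mem : ∀ a ∈ B, a⁻¹ ∈ B
  twisted : ∀ a ∈ B, ∀ b ∈ B, a * b * a ∈ B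
  /-- symmetry of the transversal maps. -/
  hl_inv : ∀ a ∈ B, ∀ b ∈ B, (hl a b)⁻¹ = hl b a
  hr_inv : ∀ a ∈ B, ∀ b ∈ B, (hr a b)⁻¹ = hr b a

namespace IsBiGyroDecomposition

variable {Γ : Type*} [Group Γ] {HL HR : Subgroup Γ} {B : Set Γ} {hl hr odot : Γ → Γ → Γ}

theorem hl_eq_and_hr_eq_of_mul_eq (h : IsBiGyroDecomposition HL HR B hl hr odot)
    {a b x y z : Γ} (ha : a ∈ B) (hb : b ∈ B) (hx : x ∈ HL) (hy : y ∈ B) (hz : z ∈ HR)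
    (hab : a * b = x * y * z) : hl a b = x ∧ hr a b = z := by
  obtain ⟨t, -, huniq⟩ := h.uniq (a * b)
  have hdecomp : (hl a b, odot a b, hr a b) = (x, y, z) :=
    (huniq _ ⟨h.hl_mem a ha b hb, h.odot_mem a ha b hb, h.hr_mem a ha b hb,
      h.decomp a ha b hb⟩).trans (huniq _ ⟨hx, hy, hz, hab⟩).symm
  simp only [Prod.mk.injEq] at hdecomp
  exact ⟨hdecomp.1, hdecomp.2.2⟩

theorem exists_inv_eq_mul_mul (h : IsBiGyroDecomposition HL HR B hl hr odot)
    {x y z : Γ} (hx : x ∈ HL) (hy : y ∈ B) (hz : z ∈ HR) :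
    ∃ m ∈ B, (x * y * z)⁻¹ = x⁻¹ * m * z⁻¹ := by
  refine ⟨z⁻¹ * (x * y⁻¹ * x⁻¹) * z, ?_, ?_⟩
  · simpa using h.normR z⁻¹ (HR.inv_mem hz) _ (h.normL x hx y⁻¹ (h.inv_mem y hy))
  · have hcomm : x⁻¹ * z⁻¹ = z⁻¹ * x⁻¹ := h.comm x⁻¹ (HL.inv_mem hx) z⁻¹ (HR.inv_mem hz)
    calc (x * y * z)⁻¹ = z⁻¹ * y⁻¹ * x⁻¹ := by group
      _ = (x⁻¹ * z⁻¹) * (x * y⁻¹ * x⁻¹) := by rw [hcomm]; group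
      _ = x⁻¹ * (z⁻¹ * (x * y⁻¹ * x⁻¹) * z) * z⁻¹ := by group

theorem hl_inv_inv_and_hr_inv_inv (h : IsBiGyroDecomposition HL HR B hl hr odot)
    {a b : Γ} (ha : a ∈ B) (hb : b ∈ B) : hl a⁻¹ b⁻¹ = hl a b ∧ hr a⁻¹ b⁻¹ = hr a b := by
  obtain ⟨m, hm, hinv⟩ := h.exists_inv_eq_mul_mul (h.hl_mem b hb a ha) (h.odot_mem b hb a ha)
    (h.hr_mem b hb a ha)
  rw [← h.decomp b hb a ha, mul_inv_rev] at hinv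
  rw [← h.hl_inv b hb a ha, ← h.hr_inv b hb a ha]
  exact h.hl_eq_and_hr_eq_of_mul_eq (h.inv_mem a ha) (h.inv_mem b hb)
    (HL.inv_mem (h.hl_mem b hb a ha)) hm (HR.inv_mem (h.hr_mem b hb a ha)) hinv

end IsBiGyroDecomposition

/-- In a bi-gyrodecomposition, left and right gyrations are even:
`lgyr[a⁻¹,b⁻¹] = lgyr[a,b]` and `rgyr[a⁻¹,b⁻¹] = rgyr[a,b]` as maps of `B`,
where `lgyr[a,b](x) = hr(a,b) x hr(a,b)⁻¹` and `rgyr[a,b](x) = hl(a,b)⁻¹ x hl(a,b)`. -/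
theorem biGyroDecomposition_gyr_even {Γ : Type*} [Group Γ]
    (HL HR : Subgroup Γ) (B : Set Γ) (hl hr odot : Γ → Γ → Γ)
    (h : IsBiGyroDecomposition HL HR B hl hr odot) :
    ∀ a ∈ B, ∀ b ∈ B, ∀ x ∈ B,
      hr a⁻¹ b⁻¹ * x * (hr a⁻¹ b⁻¹)⁻¹ = hr a b * x * (hr a b)⁻¹ ∧
      (hl a⁻¹ b⁻¹)⁻¹ * x * hl a⁻¹ b⁻¹ = (hl a b)⁻¹ * x * hl a b := by
  intro a ha b hb x _
  obtain ⟨hl_eq, hr_eq⟩ := h.hl_inv_inv_and_hr_inv_inv ha hb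
  rw [hl_eq, hr_eq]
  exact ⟨rfl, rfl⟩
end

section
/- Let Γ = H_L B H_R be a bi-gyrodecomposition. Then rgyr[a,b] = rgyr[lgyr[a,b](a), a⊙b] and lgyr[a,b] = lgyr[lgyr[a,b](a), a⊙b] for all a, b ∈ B; consequently (B, ⊙) is a bi-gyrogroupoid. -/
/-!
Everything follows from the uniqueness of the factorisation `g = h_ℓ * b * h_r`.
Factorising `a * b * c` once as `(a * b) * c` and once as `a * (b * c)` gives the
bi-gyroassociative law, and conjugating a factorisation by an element of `HR` (or `HL`)
gives again a factorisation, so the gyrations are automorphisms of `(B, ⊙)`.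
For the reduction laws, `(a ⊙ b) * lgyr[a,b] a = hl(a,b)⁻¹ * (a * b * a) * hr(a,b)⁻¹`
with `a * b * a ∈ B` because `B` is twisted; hence `hl(a ⊙ b, lgyr[a,b] a) = hl(a,b)⁻¹`
and `hr(a ⊙ b, lgyr[a,b] a) = hr(a,b)⁻¹`, and the symmetry of `hl`, `hr` turns these
into `hl(lgyr[a,b] a, a ⊙ b) = hl(a,b)` and `hr(lgyr[a,b] a, a ⊙ b) = hr(a,b)`.
-/

-- `g'` rather than `g⁻¹`, so that both `g * c * g⁻¹` and `g⁻¹ * c * g` match syntactically.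
theorem Set.bijective_conj {G : Type*} [Group G] {B : Set G} {g g' : G} (hg' : g' = g⁻¹)
    (hB : ∀ c ∈ B, g * c * g' ∈ B) (hB' : ∀ c ∈ B, g' * c * g ∈ B) :
    Function.Bijective (fun c : B => (⟨g * c * g', hB c c.2⟩ : B)) := by
  subst hg'
  exact Function.bijective_iff_has_inverse.mpr
    ⟨fun c => ⟨g⁻¹ * c * g, hB' c c.2⟩, fun c => Subtype.ext (by group),
      fun c => Subtype.ext (by group)⟩

namespace IsBiGyroDecomposition

variable {Γ : Type*} [Group Γ] {HL HR : Subgroup Γ} {B : Set Γ} {hl hr odot : Γ → Γ → Γ}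

theorem eq_of_mul_mul_eq (h : IsBiGyroDecomposition HL HR B hl hr odot)
    {p q r p' q' r' : Γ} (hpm : p ∈ HL) (hqm : q ∈ B) (hrm : r ∈ HR)
    (hpm' : p' ∈ HL) (hqm' : q' ∈ B) (hrm' : r' ∈ HR) (e : p * q * r = p' * q' * r') :
    p = p' ∧ q = q' ∧ r = r' := by
  obtain ⟨t, -, ht⟩ := h.uniq (p * q * r)
  have := (ht (p, q, r) ⟨hpm, hqm, hrm, rfl⟩).trans (ht (p', q', r') ⟨hpm', hqm', hrm', e⟩).symm
  simpa only [Prod.mk.injEq] using this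

theorem eq_of_mul_eq (h : IsBiGyroDecomposition HL HR B hl hr odot)
    {a b p q r : Γ} (ha : a ∈ B) (hb : b ∈ B)
    (hpm : p ∈ HL) (hqm : q ∈ B) (hrm : r ∈ HR) (e : a * b = p * q * r) :
    hl a b = p ∧ odot a b = q ∧ hr a b = r :=
  h.eq_of_mul_mul_eq (h.hl_mem a ha b hb) (h.odot_mem a ha b hb) (h.hr_mem a ha b hb)
    hpm hqm hrm ((h.decomp a ha b hb).symm.trans e)

theorem odot_eq_of_mul_eq_mul (h : IsBiGyroDecomposition HL HR B hl hr odot)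
    {p r p' r' x y x' y' : Γ} (hpm : p ∈ HL) (hrm : r ∈ HR) (hpm' : p' ∈ HL) (hrm' : r' ∈ HR)
    (hx : x ∈ B) (hy : y ∈ B) (hx' : x' ∈ B) (hy' : y' ∈ B)
    (e : p * (x * y) * r = p' * (x' * y') * r') : odot x y = odot x' y' := by
  have e' : p * hl x y * odot x y * (hr x y * r) =
      p' * hl x' y' * odot x' y' * (hr x' y' * r') := by
    simpa only [h.decomp x hx y hy, h.decomp x' hx' y' hy', mul_assoc] using e
  exact (h.eq_of_mul_mul_eq (mul_mem hpm (h.hl_mem x hx y hy)) (h.odot_mem x hx y hy)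
    (mul_mem (h.hr_mem x hx y hy) hrm) (mul_mem hpm' (h.hl_mem x' hx' y' hy'))
    (h.odot_mem x' hx' y' hy') (mul_mem (h.hr_mem x' hx' y' hy') hrm') e').2.1

theorem inv_conj_mem_of_mem_left (h : IsBiGyroDecomposition HL HR B hl hr odot)
    {g c : Γ} (hg : g ∈ HL) (hc : c ∈ B) : g⁻¹ * c * g ∈ B := by
  simpa only [inv_inv] using h.normL g⁻¹ (Subgroup.inv_mem _ hg) c hc

theorem inv_conj_mem_of_mem_right (h : IsBiGyroDecomposition HL HR B hl hr odot)
    {g c : Γ} (hg : g ∈ HR) (hc : c ∈ B) : g⁻¹ * c * g ∈ B := by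
  simpa only [inv_inv] using h.normR g⁻¹ (Subgroup.inv_mem _ hg) c hc

theorem odot_one_left (h : IsBiGyroDecomposition HL HR B hl hr odot)
    {b : Γ} (hb : b ∈ B) : odot 1 b = b :=
  (h.eq_of_mul_eq h.one_mem hb (Subgroup.one_mem _) hb (Subgroup.one_mem _) (by group)).2.1

theorem odot_one_right (h : IsBiGyroDecomposition HL HR B hl hr odot)
    {a : Γ} (ha : a ∈ B) : odot a 1 = a :=
  (h.eq_of_mul_eq ha h.one_mem (Subgroup.one_mem _) ha (Subgroup.one_mem _) (by group)).2.1

theorem hl_one_right (h : IsBiGyroDecomposition HL HR B hl hr odot)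
    {a : Γ} (ha : a ∈ B) : hl a 1 = 1 :=
  (h.eq_of_mul_eq ha h.one_mem (Subgroup.one_mem _) ha (Subgroup.one_mem _) (by group)).1

theorem hr_one_right (h : IsBiGyroDecomposition HL HR B hl hr odot)
    {a : Γ} (ha : a ∈ B) : hr a 1 = 1 :=
  (h.eq_of_mul_eq ha h.one_mem (Subgroup.one_mem _) ha (Subgroup.one_mem _) (by group)).2.2

theorem odot_inv_left (h : IsBiGyroDecomposition HL HR B hl hr odot)
    {a : Γ} (ha : a ∈ B) : odot a⁻¹ a = 1 :=
  (h.eq_of_mul_eq (h.inv_mem a ha) ha (Subgroup.one_mem _) h.one_mem (Subgroup.one_mem _) (by group)).2.1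

theorem odot_conj_of_mem_right (h : IsBiGyroDecomposition HL HR B hl hr odot)
    {g x y : Γ} (hg : g ∈ HR) (hx : x ∈ B) (hy : y ∈ B) :
    odot (g * x * g⁻¹) (g * y * g⁻¹) = g * odot x y * g⁻¹ := by
  have hlm := h.hl_mem x hx y hy
  have hl_conj : g * hl x y * g⁻¹ = hl x y := by rw [← h.comm _ hlm _ hg, mul_inv_cancel_right]
  refine (h.eq_of_mul_eq (h.normR g hg x hx) (h.normR g hg y hy) hlm
    (h.normR g hg _ (h.odot_mem x hx y hy))
    (mul_mem (mul_mem hg (h.hr_mem x hx y hy)) (Subgroup.inv_mem _ hg)) ?_).2.1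
  calc g * x * g⁻¹ * (g * y * g⁻¹) = g * (hl x y * odot x y * hr x y) * g⁻¹ := by
        rw [← h.decomp x hx y hy]; group
    _ = g * hl x y * g⁻¹ * (g * odot x y * g⁻¹) * (g * hr x y * g⁻¹) := by group
    _ = hl x y * (g * odot x y * g⁻¹) * (g * hr x y * g⁻¹) := by rw [hl_conj]

theorem odot_inv_conj_of_mem_left (h : IsBiGyroDecomposition HL HR B hl hr odot)
    {g x y : Γ} (hg : g ∈ HL) (hx : x ∈ B) (hy : y ∈ B) :
    odot (g⁻¹ * x * g) (g⁻¹ * y * g) = g⁻¹ * odot x y * g := by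
  have hrm := h.hr_mem x hx y hy
  have hr_conj : g⁻¹ * hr x y * g = hr x y := by
    rw [h.comm _ (Subgroup.inv_mem _ hg) _ hrm, inv_mul_cancel_right]
  refine (h.eq_of_mul_eq (h.inv_conj_mem_of_mem_left hg hx) (h.inv_conj_mem_of_mem_left hg hy)
    (mul_mem (mul_mem (Subgroup.inv_mem _ hg) (h.hl_mem x hx y hy)) hg)
    (h.inv_conj_mem_of_mem_left hg (h.odot_mem x hx y hy)) hrm ?_).2.1
  calc g⁻¹ * x * g * (g⁻¹ * y * g) = g⁻¹ * (hl x y * odot x y * hr x y) * g := by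
        rw [← h.decomp x hx y hy]; group
    _ = g⁻¹ * hl x y * g * (g⁻¹ * odot x y * g) * (g⁻¹ * hr x y * g) := by group
    _ = g⁻¹ * hl x y * g * (g⁻¹ * odot x y * g) * hr x y := by rw [hr_conj]

theorem hl_hr_odot_lgyr_self (h : IsBiGyroDecomposition HL HR B hl hr odot)
    {a b : Γ} (ha : a ∈ B) (hb : b ∈ B) :
    hl (odot a b) (hr a b * a * (hr a b)⁻¹) = (hl a b)⁻¹ ∧
      hr (odot a b) (hr a b * a * (hr a b)⁻¹) = (hr a b)⁻¹ := by
  have key := h.eq_of_mul_eq (h.odot_mem a ha b hb) (h.normR _ (h.hr_mem a ha b hb) a ha)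
    (Subgroup.inv_mem _ (h.hl_mem a ha b hb)) (h.twisted a ha b hb)
    (Subgroup.inv_mem _ (h.hr_mem a ha b hb)) (by rw [h.decomp a ha b hb]; group)
  exact ⟨key.1, key.2.2⟩

theorem hl_reduction (h : IsBiGyroDecomposition HL HR B hl hr odot)
    {a b : Γ} (ha : a ∈ B) (hb : b ∈ B) :
    hl (hr a b * a * (hr a b)⁻¹) (odot a b) = hl a b := by
  rw [← h.hl_inv _ (h.odot_mem a ha b hb) _ (h.normR _ (h.hr_mem a ha b hb) a ha),
    (h.hl_hr_odot_lgyr_self ha hb).1, inv_inv]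

theorem hr_reduction (h : IsBiGyroDecomposition HL HR B hl hr odot)
    {a b : Γ} (ha : a ∈ B) (hb : b ∈ B) :
    hr (hr a b * a * (hr a b)⁻¹) (odot a b) = hr a b := by
  rw [← h.hr_inv _ (h.odot_mem a ha b hb) _ (h.normR _ (h.hr_mem a ha b hb) a ha),
    (h.hl_hr_odot_lgyr_self ha hb).2, inv_inv]

theorem odot_bigyroassoc (h : IsBiGyroDecomposition HL HR B hl hr odot)
    {a b c : Γ} (ha : a ∈ B) (hb : b ∈ B) (hc : c ∈ B) :
    odot (odot a b) (hr a b * c * (hr a b)⁻¹) =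
      odot ((hl b c)⁻¹ * a * hl b c) (odot b c) := by
  refine h.odot_eq_of_mul_eq_mul (h.hl_mem a ha b hb) (h.hr_mem a ha b hb)
    (h.hl_mem b hb c hc) (h.hr_mem b hb c hc) (h.odot_mem a ha b hb)
    (h.normR _ (h.hr_mem a ha b hb) c hc) (h.inv_conj_mem_of_mem_left (h.hl_mem b hb c hc) ha)
    (h.odot_mem b hb c hc) ?_
  calc hl a b * (odot a b * (hr a b * c * (hr a b)⁻¹)) * hr a b = a * b * c := by
        rw [h.decomp a ha b hb]; group
    _ = hl b c * ((hl b c)⁻¹ * a * hl b c * odot b c) * hr b c := by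
        rw [mul_assoc a, h.decomp b hb c hc]; group

end IsBiGyroDecomposition

/-- In a bi-gyrodecomposition, the gyrations satisfy the reduction properties
`rgyr[a,b] = rgyr[lgyr[a,b](a), a⊙b]` and `lgyr[a,b] = lgyr[lgyr[a,b](a), a⊙b]`
(as maps of `B`); consequently, `(B, ⊙)` with the induced gyrations is a
bi-gyrogroupoid. -/
theorem biGyroDecomposition_reduction_and_biGyrogroupoid {Γ : Type*} [Group Γ]
    (HL HR : Subgroup Γ) (B : Set Γ) (hl hr odot : Γ → Γ → Γ)
    (h : IsBiGyroDecomposition HL HR B hl hr odot) :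
    (∀ a ∈ B, ∀ b ∈ B, ∀ x ∈ B,
      (hl a b)⁻¹ * x * hl a b =
        (hl (hr a b * a * (hr a b)⁻¹) (odot a b))⁻¹ * x *
          hl (hr a b * a * (hr a b)⁻¹) (odot a b) ∧
      hr a b * x * (hr a b)⁻¹ =
        hr (hr a b * a * (hr a b)⁻¹) (odot a b) * x *
          (hr (hr a b * a * (hr a b)⁻¹) (odot a b))⁻¹) ∧
    IsBiGyrogroupoid
      (fun a b : ↥B => (⟨odot a b, h.odot_mem _ a.2 _ b.2⟩ : ↥B))
      (⟨1, h.one_mem⟩ : ↥B)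
      (fun a b c : ↥B =>
        (⟨hr a b * c * (hr a b)⁻¹, h.normR _ (h.hr_mem _ a.2 _ b.2) _ c.2⟩ : ↥B))
      (fun a b c : ↥B =>
        (⟨(hl a b)⁻¹ * c * hl a b,
          by simpa using h.normL _ (HL.inv_mem (h.hl_mem _ a.2 _ b.2)) _ c.2⟩ : ↥B)) := by
  refine ⟨fun a ha b hb x _ => ⟨by rw [h.hl_reduction ha hb], by rw [h.hr_reduction ha hb]⟩,
    { zero_add := fun a => Subtype.ext (h.odot_one_left a.2)
      add_zero := fun a => Subtype.ext (h.odot_one_right a.2)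
      exists_left_inv := fun a =>
        ⟨⟨(a : Γ)⁻¹, h.inv_mem _ a.2⟩, Subtype.ext (h.odot_inv_left a.2)⟩
      lgyr_bijective := fun a b => Set.bijective_conj rfl
        (fun c hc => h.normR _ (h.hr_mem _ a.2 _ b.2) c hc)
        (fun c hc => h.inv_conj_mem_of_mem_right (h.hr_mem _ a.2 _ b.2) hc)
      rgyr_bijective := fun a b => Set.bijective_conj (inv_inv _).symm
        (fun c hc => h.inv_conj_mem_of_mem_left (h.hl_mem _ a.2 _ b.2) hc)
        (fun c hc => h.normL _ (h.hl_mem _ a.2 _ b.2) c hc)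
      lgyr_add := fun a b x y =>
        Subtype.ext (h.odot_conj_of_mem_right (h.hr_mem _ a.2 _ b.2) x.2 y.2).symm
      rgyr_add := fun a b x y =>
        Subtype.ext (h.odot_inv_conj_of_mem_left (h.hl_mem _ a.2 _ b.2) x.2 y.2).symm
      bgassoc := fun a b c => Subtype.ext (h.odot_bigyroassoc a.2 b.2 c.2)
      rgyr_red := fun a b => funext fun c => Subtype.ext (by simp only [h.hl_reduction a.2 b.2])
      lgyr_red := fun a b => funext fun c => Subtype.ext (by simp only [h.hr_reduction a.2 b.2])
      lgyr_zero := fun a => funext fun c => Subtype.ext (by simp [h.hr_one_right a.2])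
      rgyr_zero := fun a => funext fun c => Subtype.ext (by simp [h.hl_one_right a.2]) }⟩
end

section
/- Let Γ = H_L B H_R be a bi-gyrodecomposition and define the bi-gyrogroup operation a⊕b = rgyr[b,a](a ⊙ b) on B, where ⊙ is the bi-transversal operation. Then (B, ⊕) is a gyrogroup with gyrations gyr[a,b] = lgyr[a,b] ∘ rgyr[b,a]: it has a two-sided identity 0, two-sided inverses, satisfies the left gyroassociative law a⊕(b⊕c) = (a⊕b)⊕gyr[a,b](c) with each gyr[a,b] an automorphism of (B,⊕), and the left reduction property gyr[a,b] = gyr[a⊕b, b]. -/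
/-- A gyrogroup: a two-sided identity, two-sided inverses, the gyroassociative law
with each `gyr a b` an automorphism of `(G, add)`, and the left reduction property. -/
structure IsGyrogroup {G : Type*} (add : G → G → G) (zero : G)
    (gyr : G → G → G → G) : Prop where
  zero_add : ∀ a, add zero a = a
  add_zero : ∀ a, add a zero = a
  exists_inv : ∀ a, ∃ b, add b a = zero ∧ add a b = zero
  gyr_bijective : ∀ a b, Function.Bijective (gyr a b)
  gyr_add : ∀ a b x y, gyr a b (add x y) = add (gyr a b x) (gyr a b y)
  gyroassoc : ∀ a b c, add a (add b c) = add (add a b) (gyr a b c)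
  reduction : ∀ a b, gyr a b = gyr (add a b) b

section

variable {Γ : Type*} [Group Γ]

/-- `a ⊕ b = rgyr[b,a](a ⊙ b)`. -/
def biGyroAdd (hl odot : Γ → Γ → Γ) (a b : Γ) : Γ := (hl b a)⁻¹ * odot a b * hl b a

/-- `gyr[a,b] = lgyr[a,b] ∘ rgyr[b,a]`. -/
def biGyration (hl hr : Γ → Γ → Γ) (a b x : Γ) : Γ :=
  hr a b * ((hl b a)⁻¹ * x * hl b a) * (hr a b)⁻¹

end

namespace IsBiGyroDecomposition

variable {Γ : Type*} [Group Γ] {HL HR : Subgroup Γ} {B : Set Γ} {hl hr odot : Γ → Γ → Γ}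
  {a b c x y l r : Γ}

lemma inv_mul_mul_mem (h : IsBiGyroDecomposition HL HR B hl hr odot) (hlHL : l ∈ HL)
    (hx : x ∈ B) : l⁻¹ * x * l ∈ B := by
  simpa using h.normL _ (HL.inv_mem hlHL) _ hx

lemma conj_mem (h : IsBiGyroDecomposition HL HR B hl hr odot) (hlHL : l ∈ HL) (hrHR : r ∈ HR)
    (hx : x ∈ B) : l * r * x * (l * r)⁻¹ ∈ B := by
  have e : l * r * x * (l * r)⁻¹ = l * (r * x * r⁻¹) * l⁻¹ := by group
  exact e ▸ h.normL _ hlHL _ (h.normR _ hrHR _ hx)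

lemma conj_mem_left (h : IsBiGyroDecomposition HL HR B hl hr odot) (hlHL : l ∈ HL)
    (hrHR : r ∈ HR) {l₁ : Γ} (hl₁ : l₁ ∈ HL) : l * r * l₁ * (l * r)⁻¹ ∈ HL := by
  have e : l * r * l₁ * (l * r)⁻¹ = l * l₁ * l⁻¹ := by
    calc l * r * l₁ * (l * r)⁻¹ = l * (r * l₁) * r⁻¹ * l⁻¹ := by group
      _ = l * (l₁ * r) * r⁻¹ * l⁻¹ := by rw [h.comm _ hl₁ _ hrHR]
      _ = l * l₁ * l⁻¹ := by group
  exact e ▸ mul_mem (mul_mem hlHL hl₁) (HL.inv_mem hlHL)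

lemma conj_mem_right (h : IsBiGyroDecomposition HL HR B hl hr odot) (hlHL : l ∈ HL)
    (hrHR : r ∈ HR) {r₁ : Γ} (hr₁ : r₁ ∈ HR) : l * r * r₁ * (l * r)⁻¹ ∈ HR := by
  have hm : r * r₁ * r⁻¹ ∈ HR := mul_mem (mul_mem hrHR hr₁) (HR.inv_mem hrHR)
  have e : l * r * r₁ * (l * r)⁻¹ = r * r₁ * r⁻¹ := by
    calc l * r * r₁ * (l * r)⁻¹ = l * (r * r₁ * r⁻¹) * l⁻¹ := by group
      _ = r * r₁ * r⁻¹ * l * l⁻¹ := by rw [h.comm _ hlHL _ hm]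
      _ = r * r₁ * r⁻¹ := by group
  exact e ▸ hm

lemma eq_of_mul_mul_eq_s18 (h : IsBiGyroDecomposition HL HR B hl hr odot)
    {b₁ l₁ r₁ b₂ l₂ r₂ : Γ} (hb₁ : b₁ ∈ B) (hl₁ : l₁ ∈ HL) (hr₁ : r₁ ∈ HR)
    (hb₂ : b₂ ∈ B) (hl₂ : l₂ ∈ HL) (hr₂ : r₂ ∈ HR)
    (e : b₁ * l₁ * r₁ = b₂ * l₂ * r₂) : b₁ = b₂ ∧ l₁ = l₂ ∧ r₁ = r₂ := by
  have key := (h.uniq (b₁ * l₁ * r₁)).unique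
    (y₁ := (l₁, l₁⁻¹ * b₁ * l₁, r₁)) ⟨hl₁, h.inv_mul_mul_mem hl₁ hb₁, hr₁, by group⟩
    (y₂ := (l₂, l₂⁻¹ * b₂ * l₂, r₂)) ⟨hl₂, h.inv_mul_mul_mem hl₂ hb₂, hr₂, by rw [e]; group⟩
  simp only [Prod.mk.injEq] at key
  obtain ⟨rfl, hb, rfl⟩ := key
  exact ⟨by simpa using hb, rfl, rfl⟩

lemma biGyroAdd_mem (h : IsBiGyroDecomposition HL HR B hl hr odot) (ha : a ∈ B) (hb : b ∈ B) :
    biGyroAdd hl odot a b ∈ B :=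
  h.inv_mul_mul_mem (h.hl_mem _ hb _ ha) (h.odot_mem _ ha _ hb)

lemma mul_eq_biGyroAdd_mul (h : IsBiGyroDecomposition HL HR B hl hr odot) (ha : a ∈ B)
    (hb : b ∈ B) : a * b = biGyroAdd hl odot a b * hl a b * hr a b := by
  rw [biGyroAdd, ← h.hl_inv _ ha _ hb, h.decomp _ ha _ hb]
  group

lemma mul_mul_mul_eq_biGyroAdd_mul (h : IsBiGyroDecomposition HL HR B hl hr odot) (ha : a ∈ B)
    (hx : x ∈ B) (hlHL : l ∈ HL) :
    a * x * l * r = biGyroAdd hl odot a x * (hl a x * l) * (hr a x * r) := by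
  calc a * x * l * r = biGyroAdd hl odot a x * hl a x * (hr a x * l) * r := by
        rw [h.mul_eq_biGyroAdd_mul ha hx]; group
    _ = biGyroAdd hl odot a x * hl a x * (l * hr a x) * r := by
        rw [h.comm _ hlHL _ (h.hr_mem _ ha _ hx)]
    _ = biGyroAdd hl odot a x * (hl a x * l) * (hr a x * r) := by group

lemma biGyroAdd_eq_of_mul_eq (h : IsBiGyroDecomposition HL HR B hl hr odot) (ha : a ∈ B)
    (hb : b ∈ B) (hc : c ∈ B) (hlHL : l ∈ HL) (hrHR : r ∈ HR) (e : a * b = c * l * r) :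
    biGyroAdd hl odot a b = c ∧ hl a b = l ∧ hr a b = r :=
  h.eq_of_mul_mul_eq_s18 (h.biGyroAdd_mem ha hb) (h.hl_mem _ ha _ hb) (h.hr_mem _ ha _ hb)
    hc hlHL hrHR ((h.mul_eq_biGyroAdd_mul ha hb).symm.trans e)

lemma one_biGyroAdd (h : IsBiGyroDecomposition HL HR B hl hr odot) (ha : a ∈ B) :
    biGyroAdd hl odot 1 a = a :=
  (h.biGyroAdd_eq_of_mul_eq h.one_mem ha ha HL.one_mem HR.one_mem (by group)).1

lemma biGyroAdd_one (h : IsBiGyroDecomposition HL HR B hl hr odot) (ha : a ∈ B) :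
    biGyroAdd hl odot a 1 = a :=
  (h.biGyroAdd_eq_of_mul_eq ha h.one_mem ha HL.one_mem HR.one_mem (by group)).1

lemma inv_biGyroAdd_self (h : IsBiGyroDecomposition HL HR B hl hr odot) (ha : a ∈ B) :
    biGyroAdd hl odot a⁻¹ a = 1 :=
  (h.biGyroAdd_eq_of_mul_eq (h.inv_mem _ ha) ha h.one_mem HL.one_mem HR.one_mem (by group)).1

lemma biGyroAdd_inv_self (h : IsBiGyroDecomposition HL HR B hl hr odot) (ha : a ∈ B) :
    biGyroAdd hl odot a a⁻¹ = 1 :=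
  (h.biGyroAdd_eq_of_mul_eq ha (h.inv_mem _ ha) h.one_mem HL.one_mem HR.one_mem (by group)).1

lemma biGyroAdd_conj (h : IsBiGyroDecomposition HL HR B hl hr odot) (hlHL : l ∈ HL)
    (hrHR : r ∈ HR) (hx : x ∈ B) (hy : y ∈ B) :
    biGyroAdd hl odot (l * r * x * (l * r)⁻¹) (l * r * y * (l * r)⁻¹)
      = l * r * biGyroAdd hl odot x y * (l * r)⁻¹ := by
  refine (h.biGyroAdd_eq_of_mul_eq (h.conj_mem hlHL hrHR hx) (h.conj_mem hlHL hrHR hy)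
    (h.conj_mem hlHL hrHR (h.biGyroAdd_mem hx hy))
    (h.conj_mem_left hlHL hrHR (h.hl_mem _ hx _ hy))
    (h.conj_mem_right hlHL hrHR (h.hr_mem _ hx _ hy)) ?_).1
  calc l * r * x * (l * r)⁻¹ * (l * r * y * (l * r)⁻¹) = l * r * (x * y) * (l * r)⁻¹ := by group
    _ = l * r * (biGyroAdd hl odot x y * hl x y * hr x y) * (l * r)⁻¹ := by
        rw [h.mul_eq_biGyroAdd_mul hx hy]
    _ = _ := by group

lemma biGyration_mem (h : IsBiGyroDecomposition HL HR B hl hr odot) (ha : a ∈ B) (hb : b ∈ B)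
    (hx : x ∈ B) : biGyration hl hr a b x ∈ B :=
  h.normR _ (h.hr_mem _ ha _ hb) _ (h.inv_mul_mul_mem (h.hl_mem _ hb _ ha) hx)

lemma biGyration_eq_conj (h : IsBiGyroDecomposition HL HR B hl hr odot) (ha : a ∈ B) (hb : b ∈ B)
    (x : Γ) : biGyration hl hr a b x = hl a b * hr a b * x * (hl a b * hr a b)⁻¹ := by
  rw [biGyration, ← h.hl_inv _ ha _ hb, h.comm _ (h.hl_mem _ ha _ hb) _ (h.hr_mem _ ha _ hb)]
  group

lemma biGyration_biGyration_swap (h : IsBiGyroDecomposition HL HR B hl hr odot) (ha : a ∈ B)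
    (hb : b ∈ B) (x : Γ) : biGyration hl hr b a (biGyration hl hr a b x) = x := by
  rw [h.biGyration_eq_conj ha hb, biGyration, ← h.hr_inv _ ha _ hb]
  group

lemma biGyration_biGyroAdd (h : IsBiGyroDecomposition HL HR B hl hr odot) (ha : a ∈ B)
    (hb : b ∈ B) (hx : x ∈ B) (hy : y ∈ B) :
    biGyration hl hr a b (biGyroAdd hl odot x y)
      = biGyroAdd hl odot (biGyration hl hr a b x) (biGyration hl hr a b y) := by
  simp only [h.biGyration_eq_conj ha hb]
  exact (h.biGyroAdd_conj (h.hl_mem _ ha _ hb) (h.hr_mem _ ha _ hb) hx hy).symm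

lemma biGyroAdd_assoc (h : IsBiGyroDecomposition HL HR B hl hr odot) (ha : a ∈ B) (hb : b ∈ B)
    (hc : c ∈ B) :
    biGyroAdd hl odot a (biGyroAdd hl odot b c)
      = biGyroAdd hl odot (biGyroAdd hl odot a b) (biGyration hl hr a b c) := by
  have hbc := h.biGyroAdd_mem hb hc
  have hab := h.biGyroAdd_mem ha hb
  have hc' := h.biGyration_mem ha hb hc
  have e₁ : a * (b * c) = biGyroAdd hl odot a (biGyroAdd hl odot b c)
      * (hl a (biGyroAdd hl odot b c) * hl b c) * (hr a (biGyroAdd hl odot b c) * hr b c) := by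
    rw [← h.mul_mul_mul_eq_biGyroAdd_mul ha hbc (h.hl_mem _ hb _ hc),
      h.mul_eq_biGyroAdd_mul hb hc]
    group
  have e₂ : a * (b * c) = biGyroAdd hl odot (biGyroAdd hl odot a b) (biGyration hl hr a b c)
      * (hl (biGyroAdd hl odot a b) (biGyration hl hr a b c) * hl a b)
      * (hr (biGyroAdd hl odot a b) (biGyration hl hr a b c) * hr a b) := by
    rw [← h.mul_mul_mul_eq_biGyroAdd_mul hab hc' (h.hl_mem _ ha _ hb),
      h.biGyration_eq_conj ha hb, ← mul_assoc, h.mul_eq_biGyroAdd_mul ha hb]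
    group
  exact (h.eq_of_mul_mul_eq_s18 (h.biGyroAdd_mem ha hbc)
    (mul_mem (h.hl_mem _ ha _ hbc) (h.hl_mem _ hb _ hc))
    (mul_mem (h.hr_mem _ ha _ hbc) (h.hr_mem _ hb _ hc))
    (h.biGyroAdd_mem hab hc') (mul_mem (h.hl_mem _ hab _ hc') (h.hl_mem _ ha _ hb))
    (mul_mem (h.hr_mem _ hab _ hc') (h.hr_mem _ ha _ hb)) (e₁.symm.trans e₂)).1

lemma biGyration_biGyroAdd_left (h : IsBiGyroDecomposition HL HR B hl hr odot) (ha : a ∈ B)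
    (hb : b ∈ B) (x : Γ) :
    biGyration hl hr (biGyroAdd hl odot a b) b x = biGyration hl hr a b x := by
  have hab := h.biGyroAdd_mem ha hb
  have e : b * biGyroAdd hl odot a b * hl a b * hr a b = b * a * b * 1 * 1 := by
    calc b * biGyroAdd hl odot a b * hl a b * hr a b
        = b * (biGyroAdd hl odot a b * hl a b * hr a b) := by group
      _ = b * a * b * 1 * 1 := by rw [← h.mul_eq_biGyroAdd_mul ha hb]; group
  rw [h.mul_mul_mul_eq_biGyroAdd_mul hb hab (h.hl_mem _ ha _ hb)] at e
  obtain ⟨-, hl_eq, hr_eq⟩ := h.eq_of_mul_mul_eq_s18 (h.biGyroAdd_mem hb hab)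
    (mul_mem (h.hl_mem _ hb _ hab) (h.hl_mem _ ha _ hb))
    (mul_mem (h.hr_mem _ hb _ hab) (h.hr_mem _ ha _ hb))
    (h.twisted _ hb _ ha) HL.one_mem HR.one_mem e
  have hl_ba : hl b (biGyroAdd hl odot a b) = hl b a :=
    (eq_inv_of_mul_eq_one_left hl_eq).trans (h.hl_inv _ ha _ hb)
  have hr_ab : hr (biGyroAdd hl odot a b) b = hr a b := by
    rw [← h.hr_inv _ hb _ hab, eq_inv_of_mul_eq_one_left hr_eq, inv_inv]
  rw [biGyration, biGyration, hl_ba, hr_ab]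

end IsBiGyroDecomposition

/-- Given a bi-gyrodecomposition `Γ = HL B HR`, the set `B` equipped with the
bi-gyrogroup operation `a ⊕ b = rgyr[b,a](a ⊙ b)` and gyrations
`gyr[a,b] = lgyr[a,b] ∘ rgyr[b,a]` is a gyrogroup. -/
theorem biGyroDecomposition_gyrogroup {Γ : Type*} [Group Γ]
    (HL HR : Subgroup Γ) (B : Set Γ) (hl hr odot : Γ → Γ → Γ)
    (h : IsBiGyroDecomposition HL HR B hl hr odot) :
    IsGyrogroup
      (fun a b : ↥B =>
        (⟨(hl b a)⁻¹ * odot a b * hl b a,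
          by simpa using
            h.normL _ (HL.inv_mem (h.hl_mem _ b.2 _ a.2)) _ (h.odot_mem _ a.2 _ b.2)⟩ : ↥B))
      (⟨1, h.one_mem⟩ : ↥B)
      (fun a b x : ↥B =>
        (⟨hr a b * ((hl b a)⁻¹ * x * hl b a) * (hr a b)⁻¹,
          h.normR _ (h.hr_mem _ a.2 _ b.2) _
            (by simpa using h.normL _ (HL.inv_mem (h.hl_mem _ b.2 _ a.2)) _ x.2)⟩ : ↥B)) := by
  exact
    { zero_add a := Subtype.ext (h.one_biGyroAdd a.2)
      add_zero a := Subtype.ext (h.biGyroAdd_one a.2)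
      exists_inv a := ⟨⟨a⁻¹, h.inv_mem _ a.2⟩, Subtype.ext (h.inv_biGyroAdd_self a.2),
        Subtype.ext (h.biGyroAdd_inv_self a.2)⟩
      gyr_bijective a b := Function.bijective_iff_has_inverse.mpr
        ⟨fun x => ⟨biGyration hl hr b a x, h.biGyration_mem b.2 a.2 x.2⟩,
          fun x => Subtype.ext (h.biGyration_biGyration_swap a.2 b.2 x),
          fun x => Subtype.ext (h.biGyration_biGyration_swap b.2 a.2 x)⟩
      gyr_add a b x y := Subtype.ext (h.biGyration_biGyroAdd a.2 b.2 x.2 y.2)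
      gyroassoc a b c := Subtype.ext (h.biGyroAdd_assoc a.2 b.2 c.2)
      reduction a b := funext fun x => Subtype.ext (h.biGyration_biGyroAdd_left a.2 b.2 x).symm }
end
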